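/- Let 𝔤 be a Lie algebra over ℂ with a vector space direct sum decomposition 𝔤 = 𝔭⁺ ⊕ 𝔨 ⊕ 𝔭⁻ into Lie subalgebras with [𝔨,𝔭^±] ⊆ 𝔭^±, and set 𝔮 = 𝔨 ⊕ 𝔭⁻. Let V be a complex vector space carrying a 𝔤-module structure and a ℂ-linear action of a finite group Γ, together with a group homomorphism γ ↦ φ_γ from Γ to the Lie algebra automorphisms of 𝔤 such that φ_γ(𝔨) = 𝔨, φ_γ(𝔭^±) = 𝔭^±, and γ·(X·v) = φ_γ(X)·(γ·v) for all γ ∈ Γ, X ∈ 𝔤, v ∈ V. Call a subspace of V invariant if it is stable under both 𝔤 and Γ, and assume every invariant subspace has an invariant complement. Let v₀ ∈ V be a nonzero vector such that: (i) V is spanned by the vectors X₁⋯X_m·γ·v₀ with X_i ∈ 𝔤 and γ ∈ Γ; (ii) the 𝔨-submodule τ of V generated by v₀ is irreducible as a 𝔨-module; (iii) 𝔭⁻·v₀ = 0; (iv) the induced 𝔤-module L_τ := U(𝔤) ⊗_{U(𝔮)} τ (with 𝔭⁻ acting on τ by zero) is a semisimple 𝔨-module and dim_ℂ Hom_𝔨(τ,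 L_τ) = 1; (v) for every γ ∈ Γ with γ not the identity, no irreducible 𝔨-submodule of L_τ is 𝔨-isomorphic to an irreducible 𝔨-submodule of the twisted module (L_τ)^γ, where (L_τ)^γ has the same underlying space as L_τ with 𝔤-action X ∗ w := φ_γ(X)·w. Then V has no invariant subspaces other than 0 and V. -/

import Mathlib

/-!
The universal property of `L = L_τ` gives a `𝔤`-map `F : L → V` extending `τ ⊆ V`, and by (i)
`V = F(L) + ∑_{γ ≠ 1} γ·F(L)`, where `γ·F(L)` is a quotient of the twist of `L` by `φ_γ⁻¹`.
Hence `V` is a semisimple `𝔨`-module, and by Schur's lemma and (v) no `𝔨`-map sends `F(L)`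
into `∑_{γ ≠ 1} γ·F(L)`; in particular the two summands meet trivially. So a `𝔨`-map `τ → V`
lands in `F(L)`, lifts to `L` by semisimplicity of `L`, and is a scalar by (iv). The projection
onto an invariant subspace `W` along an invariant complement is such a map on `τ`, so `v₀` lies
in `W` or in the complement, and (i) forces `W = V` or `W = 0`.
-/

theorem Submodule.mem_or_mem_of_projection_eq_smul {𝕜 E : Type*} [DivisionRing 𝕜]
    [AddCommGroup E] [Module 𝕜 E] {p q : Submodule 𝕜 E} (h : IsCompl p q) {x : E} {c : 𝕜}
    (hx : p.projection q h x = c • x) : x ∈ p ∨ x ∈ q := by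
  rcases eq_or_ne c 0 with rfl | hc
  · exact Or.inr ((Submodule.projection_apply_eq_zero_iff h).1 (hx.trans (zero_smul _ x)))
  · refine Or.inl ?_
    rw [← inv_smul_smul₀ hc x, ← hx]
    exact p.smul_mem _ (Submodule.projection_apply_mem h x)

theorem exists_eq_smul_of_forall_eq_smul {𝕜 E : Type*} [DivisionRing 𝕜] [AddCommGroup E]
    [Module 𝕜 E] {P : E → Prop} {f₀ e : E} (hf₀ : ∀ f, P f → ∃ c : 𝕜, f = c • f₀) (he : P e)
    (he0 : e ≠ 0) {f : E} (hf : P f) : ∃ c : 𝕜, f = c • e := by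
  obtain ⟨c₀, rfl⟩ := hf₀ e he
  obtain ⟨c, rfl⟩ := hf₀ f hf
  have hc₀ : c₀ ≠ 0 := by rintro rfl; exact he0 (zero_smul _ _)
  exact ⟨c * c₀⁻¹, by rw [smul_smul, mul_assoc, inv_mul_cancel₀ hc₀, mul_one]⟩

namespace OperatorFamily

variable {R K M N P : Type*} [Ring R] [AddCommGroup M] [Module R M] [AddCommGroup N] [Module R N]
  [AddCommGroup P] [Module R P]

def IsInvariant (α : K → Module.End R M) (W : Submodule R M) : Prop :=
  ∀ k, ∀ x ∈ W, α k x ∈ W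

def IsIrreducible (α : K → Module.End R M) (W : Submodule R M) : Prop :=
  IsInvariant α W ∧ W ≠ ⊥ ∧ ∀ U ≤ W, IsInvariant α U → U = ⊥ ∨ U = W

def IsSemisimple (α : K → Module.End R M) : Prop :=
  sSup {W | IsIrreducible α W} = ⊤

def Intertwines (α : K → Module.End R M) (β : K → Module.End R N) (f : M →ₗ[R] N) : Prop :=
  ∀ k x, f (α k x) = β k (f x)

variable {α α' : K → Module.End R M} {β : K → Module.End R N} {δ : K → Module.End R P}
  {W S T A B : Submodule R M}

theorem isIrreducible_congr (h : ∀ W, IsInvariant α W ↔ IsInvariant α' W) :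
    IsIrreducible α W ↔ IsIrreducible α' W := by
  simp only [IsIrreducible, h]

theorem isSemisimple_congr (h : ∀ W, IsInvariant α W ↔ IsInvariant α' W) :
    IsSemisimple α ↔ IsSemisimple α' := by
  simp only [IsSemisimple, isIrreducible_congr h]

namespace IsInvariant

theorem bot : IsInvariant α ⊥ := fun k x hx => by
  rw [(Submodule.mem_bot R).1 hx, map_zero]; exact zero_mem _

theorem inf (hS : IsInvariant α S) (hT : IsInvariant α T) : IsInvariant α (S ⊓ T) :=
  fun k x hx => ⟨hS k x hx.1, hT k x hx.2⟩

theorem iSup {ι : Sort*} {D : ι → Submodule R M} (h : ∀ i, IsInvariant α (D i)) :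
    IsInvariant α (⨆ i, D i) := fun k =>
  show ⨆ i, D i ≤ (⨆ i, D i).comap (α k) from
    iSup_le fun i x hx => Submodule.mem_iSup_of_mem i (h i k x hx)

theorem sSup {𝒮 : Set (Submodule R M)} (h : ∀ S ∈ 𝒮, IsInvariant α S) :
    IsInvariant α (sSup 𝒮) := by
  rw [sSup_eq_iSup']; exact iSup fun S => h S S.2

theorem sup (hS : IsInvariant α S) (hT : IsInvariant α T) : IsInvariant α (S ⊔ T) := fun k =>
  show S ⊔ T ≤ (S ⊔ T).comap (α k) from
    sup_le (fun x hx => Submodule.mem_sup_left (hS k x hx))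
      (fun x hx => Submodule.mem_sup_right (hT k x hx))

def restrict (hW : IsInvariant α W) (k : K) : Module.End R W := (α k).restrict (hW k)

end IsInvariant

namespace Intertwines

theorem comp {g : N →ₗ[R] P} {f : M →ₗ[R] N}
    (hg : Intertwines β δ g) (hf : Intertwines α β f) :
    Intertwines α δ (g ∘ₗ f) := fun k x => by simp [hf k x, hg k (f x)]

theorem symm {e : M ≃ₗ[R] N} (he : Intertwines α β e) : Intertwines β α e.symm :=
  fun k y => e.injective <| by simpa using (he k (e.symm y)).symm

theorem isInvariant_map {f : M →ₗ[R] N} (hf : Intertwines α β f) (hA : IsInvariant α A) :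
    IsInvariant β (A.map f) := by
  rintro k _ ⟨x, hx, rfl⟩
  exact ⟨α k x, hA k x hx, hf k x⟩

theorem isInvariant_comap {f : M →ₗ[R] N} (hf : Intertwines α β f) {U : Submodule R N}
    (hU : IsInvariant β U) : IsInvariant α (U.comap f) := fun k x hx => by
  simpa [Submodule.mem_comap, hf k x] using hU k _ hx

theorem isInvariant_ker {f : M →ₗ[R] N} (hf : Intertwines α β f) :
    IsInvariant α (LinearMap.ker f) :=
  hf.isInvariant_comap IsInvariant.bot

theorem isInvariant_range {f : M →ₗ[R] N} (hf : Intertwines α β f) :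
    IsInvariant β (LinearMap.range f) := by
  rw [LinearMap.range_eq_map]; exact hf.isInvariant_map fun _ _ _ => trivial

theorem comp_subtype {f : M →ₗ[R] N} (hf : Intertwines α β f) (hW : IsInvariant α W) :
    Intertwines hW.restrict β (f ∘ₗ W.subtype) := fun k x => hf k x

theorem projection (hS : IsInvariant α S) (hT : IsInvariant α T) (h : IsCompl S T) :
    Intertwines α α (S.projection T h) := fun k x => by
  have hx : x = S.projection T h x + (x - S.projection T h x) := by abel
  conv_lhs => rw [hx, map_add, map_add,
    Submodule.projection_apply_of_mem_left h (hS k _ (Submodule.projection_apply_mem h x)),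
    Submodule.projection_apply_of_mem_right h (hT k _ (Submodule.sub_projection_mem h x)),
    add_zero]

end Intertwines

namespace IsIrreducible

variable {f : M →ₗ[R] N}

theorem disjoint_ker (hA : IsIrreducible α A) (hf : Intertwines α β f)
    (h : ¬ A ≤ LinearMap.ker f) : Disjoint A (LinearMap.ker f) := by
  rcases hA.2.2 _ inf_le_left (hA.1.inf hf.isInvariant_ker) with h' | h'
  · exact disjoint_iff.2 h'
  · exact absurd (inf_eq_left.1 h') h

theorem map (hA : IsIrreducible α A) (hf : Intertwines α β f) (h : ¬ A ≤ LinearMap.ker f) :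
    IsIrreducible β (A.map f) := by
  refine ⟨hf.isInvariant_map hA.1, fun hbot => h ?_, fun U hU hUinv => ?_⟩
  · rwa [← le_bot_iff, Submodule.map_le_iff_le_comap] at hbot
  rcases hA.2.2 _ inf_le_left (hA.1.inf (hf.isInvariant_comap hUinv)) with h' | h'
  · refine Or.inl (eq_bot_iff.2 fun u hu => ?_)
    obtain ⟨a, ha, rfl⟩ := hU hu
    have : a ∈ A ⊓ U.comap f := ⟨ha, hu⟩
    rw [h', Submodule.mem_bot] at this
    rw [this, map_zero]; exact zero_mem _
  · exact Or.inr (hU.antisymm (Submodule.map_le_iff_le_comap.2 (inf_eq_left.1 h')))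

theorem eq_of_le (hS : IsIrreducible α S) (hA : IsIrreducible α A) (h : A ≤ S) : A = S :=
  (hS.2.2 A h hA.1).resolve_left hA.2.1

theorem exists_linearEquiv (hA : IsIrreducible α A) {B : Submodule R N} (hB : IsInvariant β B)
    (hf : Intertwines α β f) (hAB : A.map f = B) (h : ¬ A ≤ LinearMap.ker f) :
    ∃ e : A ≃ₗ[R] B, Intertwines hA.1.restrict hB.restrict e := by
  have hmaps : ∀ x ∈ A, f x ∈ B := fun x hx => hAB ▸ Submodule.mem_map_of_mem hx
  have hinj := LinearMap.disjoint_ker_iff_injOn.1 (hA.disjoint_ker hf h)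
  refine ⟨LinearEquiv.ofBijective (f.restrict hmaps) ⟨fun x y hxy => ?_, fun y => ?_⟩,
    fun k x => Subtype.ext (hf k x)⟩
  · exact Subtype.ext (hinj x.2 y.2 (congrArg Subtype.val hxy))
  · obtain ⟨x, hx, hxy⟩ := (hAB ▸ y.2 : (y : N) ∈ A.map f)
    exact ⟨⟨x, hx⟩, Subtype.ext hxy⟩

end IsIrreducible

theorem isSemisimple_of_iSup_eq_top {ι : Sort*} {C : ι → Submodule R M}
    (hC : ∀ i, IsIrreducible α (C i)) (h : ⨆ i, C i = ⊤) : IsSemisimple α :=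
  top_unique (h ▸ iSup_le fun i => le_sSup (hC i))

namespace IsSemisimple

theorem exists_isCompl (hM : IsSemisimple α) (hS : IsInvariant α S) :
    ∃ T, IsInvariant α T ∧ IsCompl S T := by
  obtain ⟨T, -, ⟨hT, hST⟩, hmax⟩ := zorn_le_nonempty₀ {T | IsInvariant α T ∧ Disjoint S T}
    (fun c hc hchain _ _ => ⟨sSup c, ⟨IsInvariant.sSup fun T hT => (hc hT).1,
      (hchain.directedOn.disjoint_sSup_right).2 fun T hT => (hc hT).2⟩, fun _ => le_sSup⟩)
    ⊥ ⟨IsInvariant.bot, disjoint_bot_right⟩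
  refine ⟨T, hT, hST, codisjoint_iff.2 (top_unique (hM ▸ sSup_le fun D hD => ?_))⟩
  rcases hD.2.2 _ inf_le_left (hD.1.inf (hS.sup hT)) with h | h
  · -- `D` is independent of `S ⊔ T`, so maximality of `T` absorbs it
    have hTD : T ⊔ D ≤ T := hmax ⟨hT.sup hD.1, hST.disjoint_sup_right_of_disjoint_sup_left
      (disjoint_iff.2 (inf_comm D _ ▸ h))⟩ le_sup_left
    exact le_sup_of_le_right (le_sup_right.trans hTD)
  · exact inf_eq_left.1 h

theorem exists_not_le_ker (hM : IsSemisimple α) {f : M →ₗ[R] N} (hf : f ≠ 0) :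
    ∃ A, IsIrreducible α A ∧ ¬ A ≤ LinearMap.ker f := by
  by_contra! h
  exact hf (LinearMap.ker_eq_top.1 (top_unique (hM ▸ sSup_le h)))

theorem range_le (hM : IsSemisimple α) {f : M →ₗ[R] N} (hf : Intertwines α β f) :
    LinearMap.range f ≤ sSup {W | IsIrreducible β W} := by
  rw [LinearMap.range_eq_map, ← hM, Submodule.map_le_iff_le_comap]
  refine sSup_le fun A hA => Submodule.map_le_iff_le_comap.1 ?_
  by_cases h : A ≤ LinearMap.ker f
  · exact (Submodule.map_le_iff_le_comap.2 h).trans bot_le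
  · exact le_sSup (hA.map hf h)

theorem exists_lift (hM : IsSemisimple α) {F : M →ₗ[R] N} (hF : Intertwines α β F)
    {g : P →ₗ[R] N} (hg : Intertwines δ β g) (hgF : LinearMap.range g ≤ LinearMap.range F) :
    ∃ h : P →ₗ[R] M, Intertwines δ α h ∧ F ∘ₗ h = g := by
  obtain ⟨Q, hQ, hQF⟩ := hM.exists_isCompl hF.isInvariant_ker
  let s : LinearMap.range F →ₗ[R] M := Q.subtype ∘ₗ
    (Submodule.quotientEquivOfIsCompl _ Q hQF).toLinearMap ∘ₗ
      F.quotKerEquivRange.symm.toLinearMap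
  have hs : ∀ y, F (s y) = y := fun y => by
    rw [← LinearMap.quotKerEquivRange_apply_mk]
    simp only [s, LinearMap.comp_apply, LinearEquiv.coe_coe, Submodule.subtype_apply,
      Submodule.mk_quotientEquivOfIsCompl_apply, LinearEquiv.apply_symm_apply]
  refine ⟨s ∘ₗ g.codRestrict _ fun x => hgF (LinearMap.mem_range_self g x), fun k x => ?_,
    LinearMap.ext fun x => hs _⟩
  have hQ' : ∀ y, s y ∈ Q := fun y => (Submodule.quotientEquivOfIsCompl _ Q hQF _).2
  refine LinearMap.disjoint_ker_iff_injOn.1 hQF.symm.disjoint (hQ' _) (hQ k _ (hQ' _)) ?_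
  simp only [LinearMap.comp_apply, LinearMap.codRestrict_apply, hs, hg k x, hF k]

end IsSemisimple

/-- `V` is spanned by the image of `F : L → V` and by images `ξ j` of the twists `(L, β j)`
of `L`, none of which shares an irreducible constituent with `(L, αL)`. -/
structure IsDisjointTwistedSum {V L J : Type*} [AddCommGroup V] [Module R V] [AddCommGroup L]
    [Module R L] (αV : K → Module.End R V) (αL : K → Module.End R L)
    (β : J → K → Module.End R L) (F : L →ₗ[R] V) (ξ : J → L →ₗ[R] V) : Prop where
  semisimple : IsSemisimple αL
  semisimple_twist : ∀ j, IsSemisimple (β j)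
  intertwines : Intertwines αL αV F
  intertwines_twist : ∀ j, Intertwines (β j) αV (ξ j)
  sup_eq_top : LinearMap.range F ⊔ ⨆ j, LinearMap.range (ξ j) = ⊤
  not_intertwines : ∀ j (A B : Submodule R L) (hA : IsIrreducible αL A)
    (hB : IsIrreducible (β j) B) (e : A ≃ₗ[R] B), ¬ Intertwines hA.1.restrict hB.1.restrict e

namespace IsDisjointTwistedSum

variable {V L J : Type*} [AddCommGroup V] [Module R V] [AddCommGroup L] [Module R L]
  {αV : K → Module.End R V} {αL : K → Module.End R L} {β : J → K → Module.End R L}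
  {F : L →ₗ[R] V} {ξ : J → L →ₗ[R] V}

theorem isSemisimple (h : IsDisjointTwistedSum αV αL β F ξ) : IsSemisimple αV :=
  top_unique (h.sup_eq_top ▸ sup_le (h.semisimple.range_le h.intertwines)
    (iSup_le fun j => (h.semisimple_twist j).range_le (h.intertwines_twist j)))

theorem range_le_ker (h : IsDisjointTwistedSum αV αL β F ξ) {f : V →ₗ[R] V}
    (hf : Intertwines αV αV f) (hfξ : LinearMap.range f ≤ ⨆ j, LinearMap.range (ξ j)) :
    LinearMap.range F ≤ LinearMap.ker f := by
  by_contra hfF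
  obtain ⟨A, hA, hAf⟩ := h.semisimple.exists_not_le_ker (f := f ∘ₗ F) (by
    rwa [Ne, ← LinearMap.range_le_ker_iff])
  set S := A.map (f ∘ₗ F)
  have hS : IsIrreducible αV S := hA.map (hf.comp h.intertwines) hAf
  obtain ⟨T, hT, hST⟩ := h.isSemisimple.exists_isCompl hS.1
  have hp : Intertwines αV αV (S.projection T hST) := .projection hS.1 hT hST
  obtain ⟨j, hj⟩ : ∃ j, S.projection T hST ∘ₗ ξ j ≠ 0 := by
    by_contra! hzero
    refine hS.2.1 (hST.disjoint.eq_bot_of_le ?_)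
    calc S ≤ LinearMap.range f :=
          LinearMap.map_le_range.trans (LinearMap.range_comp_le_range _ _)
      _ ≤ ⨆ j, LinearMap.range (ξ j) := hfξ
      _ ≤ T := Submodule.ker_projection hST ▸
          iSup_le fun j => LinearMap.range_le_ker_iff.2 (hzero j)
  obtain ⟨B, hB, hBp⟩ := (h.semisimple_twist j).exists_not_le_ker hj
  have hBS : B.map (S.projection T hST ∘ₗ ξ j) = S :=
    hS.eq_of_le (hB.map (hp.comp (h.intertwines_twist j)) hBp)
      (LinearMap.map_le_range.trans ((LinearMap.range_comp_le_range _ _).trans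
        (Submodule.range_projection hST).le))
  -- `S` is a common constituent of `(L, αL)` and of the twist `(L, β j)`
  obtain ⟨e₁, he₁⟩ := hA.exists_linearEquiv hS.1 (hf.comp h.intertwines) rfl hAf
  obtain ⟨e₂, he₂⟩ := hB.exists_linearEquiv hS.1 (hp.comp (h.intertwines_twist j)) hBS hBp
  exact h.not_intertwines j A B hA hB (e₁.trans e₂.symm) (he₂.symm.comp he₁)

theorem isCompl_range (h : IsDisjointTwistedSum αV αL β F ξ) :
    IsCompl (LinearMap.range F) (⨆ j, LinearMap.range (ξ j)) := by
  refine ⟨disjoint_iff.2 ?_, codisjoint_iff.2 h.sup_eq_top⟩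
  have hN := h.intertwines.isInvariant_range.inf
    (IsInvariant.iSup fun j => (h.intertwines_twist j).isInvariant_range)
  obtain ⟨T, hT, hNT⟩ := h.isSemisimple.exists_isCompl hN
  have hker := h.range_le_ker (Intertwines.projection hN hT hNT)
    ((Submodule.range_projection hNT).trans_le inf_le_right)
  exact hNT.disjoint.eq_bot_of_le (Submodule.ker_projection hNT ▸ inf_le_left.trans hker)

theorem exists_eq_smul (h : IsDisjointTwistedSum αV αL β F ξ) {τ : Submodule R V}
    (hτ : IsInvariant αV τ) (ι : τ →ₗ[R] L) (hFι : F ∘ₗ ι = τ.subtype)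
    (hmult : ∀ f : τ →ₗ[R] L, Intertwines hτ.restrict αL f → ∃ c : R, ∀ t, f t = c • ι t)
    {g : V →ₗ[R] V} (hg : Intertwines αV αV g) : ∃ c : R, ∀ x ∈ τ, g x = c • x := by
  have hV₂ := h.isCompl_range.symm
  have hker := h.range_le_ker ((Intertwines.projection (IsInvariant.iSup fun j =>
      (h.intertwines_twist j).isInvariant_range) h.intertwines.isInvariant_range hV₂).comp hg)
    ((LinearMap.range_comp_le_range _ _).trans (Submodule.range_projection hV₂).le)
  have hgF : LinearMap.range (g ∘ₗ τ.subtype) ≤ LinearMap.range F := by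
    rintro _ ⟨t, rfl⟩
    have ht : (t : V) ∈ LinearMap.range F := ⟨ι t, LinearMap.congr_fun hFι t⟩
    exact (Submodule.projection_apply_eq_zero_iff hV₂).1 (hker ht)
  obtain ⟨f, hf, hFf⟩ := h.semisimple.exists_lift h.intertwines (hg.comp_subtype hτ) hgF
  obtain ⟨c, hc⟩ := hmult f hf
  refine ⟨c, fun x hx => ?_⟩
  calc g x = F (f ⟨x, hx⟩) := (LinearMap.congr_fun hFf ⟨x, hx⟩).symm
    _ = c • F (ι ⟨x, hx⟩) := by rw [hc, map_smul]
    _ = c • x := congrArg (c • ·) (LinearMap.congr_fun hFι ⟨x, hx⟩)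

end IsDisjointTwistedSum

end OperatorFamily

namespace ULift

variable {R L M : Type*}

instance instLieRingModule [LieRing L] [AddCommGroup M] [LieRingModule L M] :
    LieRingModule L (ULift M) where
  bracket x m := up ⁅x, m.down⁆
  add_lie x y m := ULift.ext _ _ (add_lie x y m.down)
  lie_add x m n := ULift.ext _ _ (lie_add x m.down n.down)
  leibniz_lie x y m := ULift.ext _ _ (leibniz_lie x y m.down)

instance instLieModule [CommRing R] [LieRing L] [LieAlgebra R L] [AddCommGroup M] [Module R M]
    [LieRingModule L M] [LieModule R L M] : LieModule R L (ULift M) where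
  smul_lie t x m := ULift.ext _ _ (smul_lie t x m.down)
  lie_smul t x m := ULift.ext _ _ (lie_smul t x m.down)

end ULift

section LieAlgebra

open OperatorFamily

variable {R 𝔤 M : Type*} [CommRing R] [LieRing 𝔤] [LieAlgebra R 𝔤]
  [AddCommGroup M] [Module R M] [LieRingModule 𝔤 M] [LieModule R 𝔤 M]

/-- `𝔨` acting through `θ`: `twistedAction 𝔨 (φ γ) M` is the `𝔨`-module underlying `M^γ`. -/
def twistedAction (𝔨 : LieSubalgebra R 𝔤) (θ : 𝔤 → 𝔤) (M : Type*) [AddCommGroup M]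
    [Module R M] [LieRingModule 𝔤 M] [LieModule R 𝔤 M] (X : 𝔨) : Module.End R M :=
  LieModule.toEnd R 𝔤 M (θ X)

variable {𝔨 : LieSubalgebra R 𝔤} {θ : 𝔤 → 𝔤} {W : Submodule R M}

theorem isInvariant_twistedAction_iff :
    IsInvariant (twistedAction 𝔨 θ M) W ↔ ∀ X ∈ 𝔨, ∀ w ∈ W, ⁅θ X, w⁆ ∈ W :=
  Subtype.forall

theorem isIrreducible_twistedAction_iff :
    OperatorFamily.IsIrreducible (twistedAction 𝔨 θ M) W ↔
      (∀ X ∈ 𝔨, ∀ w ∈ W, ⁅θ X, w⁆ ∈ W) ∧ W ≠ ⊥ ∧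
        ∀ U ≤ W, (∀ X ∈ 𝔨, ∀ w ∈ U, ⁅θ X, w⁆ ∈ U) → U = ⊥ ∨ U = W := by
  simp only [OperatorFamily.IsIrreducible, isInvariant_twistedAction_iff]

theorem isInvariant_twistedAction_iff_of_image_eq (hθ : θ '' 𝔨 = 𝔨) :
    IsInvariant (twistedAction 𝔨 θ M) W ↔ IsInvariant (twistedAction 𝔨 id M) W := by
  simp only [isInvariant_twistedAction_iff, id]
  refine ⟨fun h Y hY => ?_, fun h X hX => h _ ?_⟩
  · obtain ⟨X, hX, rfl⟩ : Y ∈ θ '' 𝔨 := by rw [hθ]; exact hY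
    exact h X hX
  · rw [← SetLike.mem_coe, ← hθ]; exact Set.mem_image_of_mem θ hX

theorem lie_mem_maxTrivSubmodule {𝔭 : LieSubalgebra R 𝔤} (h : ∀ X ∈ 𝔨, ∀ Y ∈ 𝔭, ⁅X, Y⁆ ∈ 𝔭)
    {X : 𝔤} (hX : X ∈ 𝔨) {m : M} (hm : m ∈ LieModule.maxTrivSubmodule R 𝔭 M) :
    ⁅X, m⁆ ∈ LieModule.maxTrivSubmodule R 𝔭 M := by
  rw [LieModule.mem_maxTrivSubmodule] at hm ⊢
  rintro ⟨Y, hY⟩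
  have hYX : ⁅Y, X⁆ ∈ 𝔭 := by rw [← lie_skew]; exact neg_mem (h X hX Y hY)
  simp only [LieSubalgebra.coe_bracket_of_module] at hm ⊢
  rw [leibniz_lie, hm ⟨Y, hY⟩, hm ⟨_, hYX⟩, lie_zero, zero_add]

theorem lie_eq_zero_of_mem_of_normalizes {𝔭 : LieSubalgebra R 𝔤}
    (h : ∀ X ∈ 𝔨, ∀ Y ∈ 𝔭, ⁅X, Y⁆ ∈ 𝔭) {v₀ : M} (hv₀ : ∀ Y ∈ 𝔭, ⁅Y, v₀⁆ = 0)
    {τ : Submodule R M}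
    (hτ : ∀ W : Submodule R M, v₀ ∈ W → (∀ X ∈ 𝔨, ∀ w ∈ W, ⁅X, w⁆ ∈ W) → τ ≤ W) :
    ∀ Y ∈ 𝔭, ∀ w ∈ τ, ⁅Y, w⁆ = 0 := fun Y hY w hw =>
  (LieModule.mem_maxTrivSubmodule R 𝔭 M w).1
    (hτ _ ((LieModule.mem_maxTrivSubmodule R 𝔭 M v₀).2 fun Y => hv₀ Y Y.2)
      (fun _ hX _ hm => lie_mem_maxTrivSubmodule h hX hm) hw) ⟨Y, hY⟩

end LieAlgebra

section Induced

open OperatorFamily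

variable {R : Type*} [CommRing R] {𝔤 : Type u} [LieRing 𝔤] [LieAlgebra R 𝔤]
  {V : Type v} [AddCommGroup V] [Module R V] [LieRingModule 𝔤 V] [LieModule R 𝔤 V]
  {L : Type (max u v)} [AddCommGroup L] [Module R L] [LieRingModule 𝔤 L]

theorem exists_equivariant_extension_of_universal {𝔨 𝔭 : LieSubalgebra R 𝔤} {τ : Submodule R V}
    (hτ : ∀ X ∈ 𝔨, ∀ w ∈ τ, ⁅X, w⁆ ∈ τ) (hτ𝔭 : ∀ Y ∈ 𝔭, ∀ w ∈ τ, ⁅Y, w⁆ = 0)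
    {ι : τ →ₗ[R] L}
    (huniv : ∀ (M : Type (max u v)) [AddCommGroup M] [Module R M]
        [LieRingModule 𝔤 M] [LieModule R 𝔤 M],
      ∀ f : τ →ₗ[R] M,
        (∀ (X : 𝔤) (hX : X ∈ 𝔨) (t : τ),
          f ⟨⁅X, (t : V)⁆, hτ X hX (t : V) t.2⟩ = ⁅X, f t⁆) →
        (∀ Y ∈ 𝔭, ∀ t : τ, ⁅Y, f t⁆ = 0) →
        ∃! F : L →ₗ[R] M, (∀ (X : 𝔤) (x : L), F ⁅X, x⁆ = ⁅X, F x⁆) ∧ F ∘ₗ ι = f) :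
    ∃ F : L →ₗ[R] V, (∀ (X : 𝔤) (x : L), F ⁅X, x⁆ = ⁅X, F x⁆) ∧ F ∘ₗ ι = τ.subtype := by
  -- `huniv` only quantifies over modules in `Type (max u v)`
  obtain ⟨F, ⟨hF, hFι⟩, -⟩ := huniv (ULift.{u} V)
    (ULift.moduleEquiv.symm.toLinearMap ∘ₗ τ.subtype) (fun _ _ _ => rfl)
    (fun Y hY t => ULift.ext _ _ (hτ𝔭 Y hY t t.2))
  refine ⟨ULift.moduleEquiv.toLinearMap ∘ₗ F, fun X x => congrArg ULift.down (hF X x), ?_⟩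
  rw [LinearMap.comp_assoc, hFι]
  rfl

theorem sup_iSup_range_eq_top [LieModule R 𝔤 L] {Γ : Type*} [Group Γ] {ρ : Γ →* (V ≃ₗ[R] V)}
    {θ : Γ → 𝔤 → 𝔤} (hρ : ∀ γ X v, ρ γ ⁅θ γ X, v⁆ = ⁅X, ρ γ v⁆) {F : L →ₗ[R] V}
    (hF : ∀ (X : 𝔤) x, F ⁅X, x⁆ = ⁅X, F x⁆) {v₀ : V} (hv₀ : v₀ ∈ LinearMap.range F)
    (hgen : ∀ W : Submodule R V, (∀ γ, ρ γ v₀ ∈ W) → (∀ X : 𝔤, ∀ w ∈ W, ⁅X, w⁆ ∈ W) → W = ⊤) :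
    LinearMap.range F ⊔ ⨆ γ : {γ : Γ // γ ≠ 1}, LinearMap.range ((ρ γ).toLinearMap ∘ₗ F) = ⊤ :=
    by
  refine hgen _ (fun γ => ?_) ?_
  · obtain ⟨x, rfl⟩ := hv₀
    rcases eq_or_ne γ 1 with rfl | hγ
    · exact Submodule.mem_sup_left (by simp)
    · exact Submodule.mem_sup_right (Submodule.mem_iSup_of_mem ⟨γ, hγ⟩ ⟨x, rfl⟩)
  · have hρF : ∀ γ, Intertwines (fun X => LieModule.toEnd R 𝔤 L (θ γ X))
        (LieModule.toEnd R 𝔤 V) ((ρ γ).toLinearMap ∘ₗ F) := fun γ X x => by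
      simp only [LieModule.toEnd_apply_apply, LinearMap.comp_apply, hF, LinearEquiv.coe_coe, hρ]
    exact (show Intertwines (LieModule.toEnd R 𝔤 L) (LieModule.toEnd R 𝔤 V) F from hF)
      |>.isInvariant_range.sup (IsInvariant.iSup fun γ => (hρF γ).isInvariant_range)

end Induced

open OperatorFamily in
theorem stmt_8_general {𝔤 : Type u} [LieRing 𝔤] [LieAlgebra ℂ 𝔤]
    (𝔨 𝔭m : LieSubalgebra ℂ 𝔤)
    (hkm : ∀ X ∈ 𝔨, ∀ Y ∈ 𝔭m, ⁅X, Y⁆ ∈ 𝔭m)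
    {V : Type v} [AddCommGroup V] [Module ℂ V] [LieRingModule 𝔤 V] [LieModule ℂ 𝔤 V]
    {Γ : Type*} [Group Γ] (ρ : Γ →* (V ≃ₗ[ℂ] V))
    -- `φ` is a group homomorphism from `Γ` to the Lie algebra automorphisms of `𝔤` ...
    (φ : Γ → (𝔤 ≃ₗ⁅ℂ⁆ 𝔤))
    (hφone : ∀ X : 𝔤, φ 1 X = X)
    (hφmul : ∀ (γ γ' : Γ) (X : 𝔤), φ (γ * γ') X = φ γ (φ γ' X))
    -- ... preserving `𝔨`, `𝔭⁺` and `𝔭⁻`: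
    (hφk : ∀ γ : Γ, (φ γ) '' (𝔨 : Set 𝔤) = (𝔨 : Set 𝔤))
    -- compatibility `γ·(X·v) = φ_γ(X)·(γ·v)`:
    (hcomp : ∀ (γ : Γ) (X : 𝔤) (w : V), ρ γ ⁅X, w⁆ = ⁅φ γ X, ρ γ w⁆)
    -- every invariant subspace has an invariant complement:
    (hcompl : ∀ W : Submodule ℂ V,
      (∀ X : 𝔤, ∀ w ∈ W, ⁅X, w⁆ ∈ W) → (∀ γ : Γ, ∀ w ∈ W, ρ γ w ∈ W) →
      ∃ W' : Submodule ℂ V,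
        ((∀ X : 𝔤, ∀ w ∈ W', ⁅X, w⁆ ∈ W') ∧ (∀ γ : Γ, ∀ w ∈ W', ρ γ w ∈ W')) ∧
        IsCompl W W')
    (v₀ : V) (hv₀ : v₀ ≠ 0)
    -- (i) `V` is spanned by the vectors `X₁⋯X_m·γ·v₀`:
    (hgen : ∀ W : Submodule ℂ V, (∀ γ : Γ, ρ γ v₀ ∈ W) →
      (∀ X : 𝔤, ∀ w ∈ W, ⁅X, w⁆ ∈ W) → W = ⊤)
    -- `τ` is the `𝔨`-submodule of `V` generated by `v₀`:
    (τ : Submodule ℂ V) (hv₀τ : v₀ ∈ τ)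
    (hτstab : ∀ X ∈ 𝔨, ∀ w ∈ τ, ⁅X, w⁆ ∈ τ)
    (hτmin : ∀ W : Submodule ℂ V, v₀ ∈ W → (∀ X ∈ 𝔨, ∀ w ∈ W, ⁅X, w⁆ ∈ W) → τ ≤ W)
    -- (iii) `𝔭⁻ · v₀ = 0`:
    (hann : ∀ Y ∈ 𝔭m, ⁅Y, v₀⁆ = 0)
    -- `L` is the induced `𝔤`-module `L_τ = U(𝔤) ⊗_{U(𝔮)} τ`, characterized by the
    -- universal property `Hom_𝔤(L_τ, M) ≅ Hom_𝔮(τ, M)`: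
    (L : Type (max u v)) [AddCommGroup L] [Module ℂ L] [LieRingModule 𝔤 L] [LieModule ℂ 𝔤 L]
    (ι : τ →ₗ[ℂ] L)
    (hιeq : ∀ (X : 𝔤) (hX : X ∈ 𝔨) (t : τ),
      ι ⟨⁅X, (t : V)⁆, hτstab X hX (t : V) t.2⟩ = ⁅X, ι t⁆)
    (huniv : ∀ (M : Type (max u v)) [AddCommGroup M] [Module ℂ M]
        [LieRingModule 𝔤 M] [LieModule ℂ 𝔤 M],
      ∀ f : τ →ₗ[ℂ] M,
        (∀ (X : 𝔤) (hX : X ∈ 𝔨) (t : τ),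
          f ⟨⁅X, (t : V)⁆, hτstab X hX (t : V) t.2⟩ = ⁅X, f t⁆) →
        (∀ Y ∈ 𝔭m, ∀ t : τ, ⁅Y, f t⁆ = 0) →
        ∃! F : L →ₗ[ℂ] M, (∀ (X : 𝔤) (x : L), F ⁅X, x⁆ = ⁅X, F x⁆) ∧ F ∘ₗ ι = f)
    -- (iv) `L_τ` is a semisimple `𝔨`-module ...
    (hss : ∃ (I : Type (max u v)) (C : I → Submodule ℂ L),
      (∀ i, (∀ X ∈ 𝔨, ∀ w ∈ C i, ⁅X, w⁆ ∈ C i) ∧ C i ≠ ⊥ ∧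
        ∀ W ≤ C i, (∀ X ∈ 𝔨, ∀ w ∈ W, ⁅X, w⁆ ∈ W) → W = ⊥ ∨ W = C i) ∧
      iSup C = ⊤)
    -- ... and `dim_ℂ Hom_𝔨(τ, L_τ) = 1`:
    (hmult : ∃ f₀ : τ →ₗ[ℂ] L, f₀ ≠ 0 ∧
      (∀ (X : 𝔤) (hX : X ∈ 𝔨) (t : τ),
        f₀ ⟨⁅X, (t : V)⁆, hτstab X hX (t : V) t.2⟩ = ⁅X, f₀ t⁆) ∧
      ∀ f : τ →ₗ[ℂ] L,
        (∀ (X : 𝔤) (hX : X ∈ 𝔨) (t : τ),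
          f ⟨⁅X, (t : V)⁆, hτstab X hX (t : V) t.2⟩ = ⁅X, f t⁆) →
        ∃ c : ℂ, f = c • f₀)
    -- (v) for `γ ≠ 1`, no irreducible `𝔨`-submodule of `L_τ` is `𝔨`-isomorphic to an
    -- irreducible `𝔨`-submodule of the twist `(L_τ)^γ` (with action `X ∗ w = φ_γ(X)·w`):
    (hdistinct : ∀ γ : Γ, γ ≠ 1 →
      ∀ (W₁ : Submodule ℂ L) (h₁ : ∀ X ∈ 𝔨, ∀ w ∈ W₁, ⁅X, w⁆ ∈ W₁),
        W₁ ≠ ⊥ → (∀ W ≤ W₁, (∀ X ∈ 𝔨, ∀ w ∈ W, ⁅X, w⁆ ∈ W) → W = ⊥ ∨ W = W₁) →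
      ∀ (W₂ : Submodule ℂ L) (h₂ : ∀ X ∈ 𝔨, ∀ w ∈ W₂, ⁅φ γ X, w⁆ ∈ W₂),
        W₂ ≠ ⊥ → (∀ W ≤ W₂, (∀ X ∈ 𝔨, ∀ w ∈ W, ⁅φ γ X, w⁆ ∈ W) → W = ⊥ ∨ W = W₂) →
      ¬ ∃ e : W₁ ≃ₗ[ℂ] W₂, ∀ (X : 𝔤) (hX : X ∈ 𝔨) (w : W₁),
          (e ⟨⁅X, (w : L)⁆, h₁ X hX (w : L) w.2⟩ : W₂)
            = ⟨⁅φ γ X, ((e w : W₂) : L)⁆, h₂ X hX ((e w : W₂) : L) (e w).2⟩) :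
    -- conclusion: no invariant subspaces other than `0` and `V`
    ∀ W : Submodule ℂ V,
      (∀ X : 𝔤, ∀ w ∈ W, ⁅X, w⁆ ∈ W) → (∀ γ : Γ, ∀ w ∈ W, ρ γ w ∈ W) →
      W = ⊥ ∨ W = ⊤ := by
  obtain ⟨F, hF, hFι⟩ := exists_equivariant_extension_of_universal hτstab
    (lie_eq_zero_of_mem_of_normalizes hkm hann hτmin) huniv
  have hv₀F : F (ι ⟨v₀, hv₀τ⟩) = v₀ := LinearMap.congr_fun hFι _
  have hρ : ∀ γ X v, ρ γ ⁅φ γ⁻¹ X, v⁆ = ⁅X, ρ γ v⁆ := fun γ X v => by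
    rw [hcomp, ← hφmul, mul_inv_cancel, hφone]
  obtain ⟨I, C, hC, hCtop⟩ := hss
  have hL : IsSemisimple (twistedAction 𝔨 id L) :=
    isSemisimple_of_iSup_eq_top (fun i => isIrreducible_twistedAction_iff.2 (hC i)) hCtop
  have hsum : IsDisjointTwistedSum (twistedAction 𝔨 id V) (twistedAction 𝔨 id L)
      (fun γ : {γ : Γ // γ ≠ 1} => twistedAction 𝔨 (φ (γ : Γ)⁻¹) L) F
      (fun γ => (ρ γ).toLinearMap ∘ₗ F) :=
    { semisimple := hL
      semisimple_twist := fun _ =>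
        (isSemisimple_congr fun _ => isInvariant_twistedAction_iff_of_image_eq (hφk _)).2 hL
      intertwines := fun X x => hF X x
      intertwines_twist := fun γ X x => by
        simp only [twistedAction, LieModule.toEnd_apply_apply, LinearMap.comp_apply, hF,
          LinearEquiv.coe_coe, hρ, id]
      sup_eq_top := sup_iSup_range_eq_top hρ hF ⟨_, hv₀F⟩ hgen
      not_intertwines := fun γ A B hA hB e he => by
        obtain ⟨hA₁, hA₂, hA₃⟩ := isIrreducible_twistedAction_iff.1 hA
        obtain ⟨hB₁, hB₂, hB₃⟩ := isIrreducible_twistedAction_iff.1 hB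
        exact hdistinct (γ : Γ)⁻¹ (inv_ne_one.2 γ.2) A hA₁ hA₂ hA₃ B hB₁ hB₂ hB₃
          ⟨e, fun X hX w => he ⟨X, hX⟩ w⟩ }
  have hτ : IsInvariant (twistedAction 𝔨 id V) τ := fun X => hτstab X X.2
  have hmult' : ∀ f : τ →ₗ[ℂ] L, Intertwines hτ.restrict (twistedAction 𝔨 id L) f →
      ∃ c : ℂ, ∀ t, f t = c • ι t := by
    obtain ⟨f₀, -, -, hf₀⟩ := hmult
    have hι0 : ι ≠ 0 := fun h => hv₀ (by rw [← hv₀F, h, LinearMap.zero_apply, map_zero])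
    intro f hf
    obtain ⟨c, rfl⟩ := exists_eq_smul_of_forall_eq_smul hf₀ hιeq hι0 fun X hX t => hf ⟨X, hX⟩ t
    exact ⟨c, fun t => rfl⟩
  intro W hW hWΓ
  obtain ⟨W', ⟨hW', hW'Γ⟩, hWW'⟩ := hcompl W hW hWΓ
  obtain ⟨c, hc⟩ := hsum.exists_eq_smul hτ ι hFι hmult'
    (Intertwines.projection (α := twistedAction 𝔨 id V) (fun X => hW X) (fun X => hW' X) hWW')
  rcases Submodule.mem_or_mem_of_projection_eq_smul hWW' (hc v₀ hv₀τ) with h | h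
  · exact Or.inr (hgen W (fun γ => hWΓ γ v₀ h) hW)
  · exact Or.inl (eq_bot_of_isCompl_top (hgen W' (fun γ => hW'Γ γ v₀ h) hW' ▸ hWW'))

/-- Non-connected version of the irreducibility criterion.  `𝔤 = 𝔭⁺ ⊕ 𝔨 ⊕ 𝔭⁻` is a Lie
algebra over ℂ with `[𝔨,𝔭^±] ⊆ 𝔭^±`; `V` carries a `𝔤`-module structure and an action `ρ`
of a finite group `Γ`, compatible through a homomorphism `φ` from `Γ` to the Lie algebra
automorphisms of `𝔤` preserving `𝔨`, `𝔭⁺`, `𝔭⁻`: `γ·(X·v) = φ_γ(X)·(γ·v)`.  Every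
invariant (i.e. `𝔤`- and `Γ`-stable) subspace is assumed to have an invariant complement.
`v₀ ≠ 0` satisfies: (i) `V` is spanned by the `X₁⋯X_m·γ·v₀`; (ii) the `𝔨`-submodule `τ`
generated by `v₀` is irreducible; (iii) `𝔭⁻·v₀ = 0`; (iv) `L_τ = U(𝔤) ⊗_{U(𝔮)} τ`
(characterized by its universal property) is `𝔨`-semisimple with
`dim_ℂ Hom_𝔨(τ, L_τ) = 1`; (v) for `γ ≠ 1`, no irreducible `𝔨`-submodule of `L_τ` is
`𝔨`-isomorphic to one of the twist `(L_τ)^γ` (action `X ∗ w = φ_γ(X)·w`).  Then `V` has no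
invariant subspaces other than `0` and `V`. -/
theorem stmt_8 {𝔤 : Type u} [LieRing 𝔤] [LieAlgebra ℂ 𝔤]
    (𝔨 𝔭p 𝔭m : LieSubalgebra ℂ 𝔤)
    -- `𝔤 = 𝔭⁺ ⊕ 𝔨 ⊕ 𝔭⁻` as vector spaces:
    (hsup : (𝔭p : Submodule ℂ 𝔤) ⊔ (𝔨 : Submodule ℂ 𝔤) ⊔ (𝔭m : Submodule ℂ 𝔤) = ⊤)
    (hind₁ : (𝔭p : Submodule ℂ 𝔤) ⊓ ((𝔨 : Submodule ℂ 𝔤) ⊔ (𝔭m : Submodule ℂ 𝔤)) = ⊥)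
    (hind₂ : (𝔨 : Submodule ℂ 𝔤) ⊓ (𝔭m : Submodule ℂ 𝔤) = ⊥)
    (hkp : ∀ X ∈ 𝔨, ∀ Y ∈ 𝔭p, ⁅X, Y⁆ ∈ 𝔭p)
    (hkm : ∀ X ∈ 𝔨, ∀ Y ∈ 𝔭m, ⁅X, Y⁆ ∈ 𝔭m)
    {V : Type v} [AddCommGroup V] [Module ℂ V] [LieRingModule 𝔤 V] [LieModule ℂ 𝔤 V]
    {Γ : Type*} [Group Γ] [Finite Γ] (ρ : Γ →* (V ≃ₗ[ℂ] V))
    -- `φ` is a group homomorphism from `Γ` to the Lie algebra automorphisms of `𝔤` ...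
    (φ : Γ → (𝔤 ≃ₗ⁅ℂ⁆ 𝔤))
    (hφone : ∀ X : 𝔤, φ 1 X = X)
    (hφmul : ∀ (γ γ' : Γ) (X : 𝔤), φ (γ * γ') X = φ γ (φ γ' X))
    -- ... preserving `𝔨`, `𝔭⁺` and `𝔭⁻`:
    (hφk : ∀ γ : Γ, (φ γ) '' (𝔨 : Set 𝔤) = (𝔨 : Set 𝔤))
    (hφp : ∀ γ : Γ, (φ γ) '' (𝔭p : Set 𝔤) = (𝔭p : Set 𝔤))
    (hφm : ∀ γ : Γ, (φ γ) '' (𝔭m : Set 𝔤) = (𝔭m : Set 𝔤))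
    -- compatibility `γ·(X·v) = φ_γ(X)·(γ·v)`:
    (hcomp : ∀ (γ : Γ) (X : 𝔤) (w : V), ρ γ ⁅X, w⁆ = ⁅φ γ X, ρ γ w⁆)
    -- every invariant subspace has an invariant complement:
    (hcompl : ∀ W : Submodule ℂ V,
      (∀ X : 𝔤, ∀ w ∈ W, ⁅X, w⁆ ∈ W) → (∀ γ : Γ, ∀ w ∈ W, ρ γ w ∈ W) →
      ∃ W' : Submodule ℂ V,
        ((∀ X : 𝔤, ∀ w ∈ W', ⁅X, w⁆ ∈ W') ∧ (∀ γ : Γ, ∀ w ∈ W', ρ γ w ∈ W')) ∧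
        IsCompl W W')
    (v₀ : V) (hv₀ : v₀ ≠ 0)
    -- (i) `V` is spanned by the vectors `X₁⋯X_m·γ·v₀`:
    (hgen : ∀ W : Submodule ℂ V, (∀ γ : Γ, ρ γ v₀ ∈ W) →
      (∀ X : 𝔤, ∀ w ∈ W, ⁅X, w⁆ ∈ W) → W = ⊤)
    -- `τ` is the `𝔨`-submodule of `V` generated by `v₀`:
    (τ : Submodule ℂ V) (hv₀τ : v₀ ∈ τ)
    (hτstab : ∀ X ∈ 𝔨, ∀ w ∈ τ, ⁅X, w⁆ ∈ τ)
    (hτmin : ∀ W : Submodule ℂ V, v₀ ∈ W → (∀ X ∈ 𝔨, ∀ w ∈ W, ⁅X, w⁆ ∈ W) → τ ≤ W)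
    -- (ii) `τ` is irreducible as a `𝔨`-module:
    (hτne : τ ≠ ⊥)
    (hτirr : ∀ W ≤ τ, (∀ X ∈ 𝔨, ∀ w ∈ W, ⁅X, w⁆ ∈ W) → W = ⊥ ∨ W = τ)
    -- (iii) `𝔭⁻ · v₀ = 0`:
    (hann : ∀ Y ∈ 𝔭m, ⁅Y, v₀⁆ = 0)
    -- `L` is the induced `𝔤`-module `L_τ = U(𝔤) ⊗_{U(𝔮)} τ`, characterized by the
    -- universal property `Hom_𝔤(L_τ, M) ≅ Hom_𝔮(τ, M)`:
    (L : Type (max u v)) [AddCommGroup L] [Module ℂ L] [LieRingModule 𝔤 L] [LieModule ℂ 𝔤 L]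
    (ι : τ →ₗ[ℂ] L)
    (hιeq : ∀ (X : 𝔤) (hX : X ∈ 𝔨) (t : τ),
      ι ⟨⁅X, (t : V)⁆, hτstab X hX (t : V) t.2⟩ = ⁅X, ι t⁆)
    (hιann : ∀ Y ∈ 𝔭m, ∀ t : τ, ⁅Y, ι t⁆ = 0)
    (huniv : ∀ (M : Type (max u v)) [AddCommGroup M] [Module ℂ M]
        [LieRingModule 𝔤 M] [LieModule ℂ 𝔤 M],
      ∀ f : τ →ₗ[ℂ] M,
        (∀ (X : 𝔤) (hX : X ∈ 𝔨) (t : τ),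
          f ⟨⁅X, (t : V)⁆, hτstab X hX (t : V) t.2⟩ = ⁅X, f t⁆) →
        (∀ Y ∈ 𝔭m, ∀ t : τ, ⁅Y, f t⁆ = 0) →
        ∃! F : L →ₗ[ℂ] M, (∀ (X : 𝔤) (x : L), F ⁅X, x⁆ = ⁅X, F x⁆) ∧ F ∘ₗ ι = f)
    -- (iv) `L_τ` is a semisimple `𝔨`-module ...
    (hss : ∃ (I : Type (max u v)) (C : I → Submodule ℂ L),
      (∀ i, (∀ X ∈ 𝔨, ∀ w ∈ C i, ⁅X, w⁆ ∈ C i) ∧ C i ≠ ⊥ ∧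
        ∀ W ≤ C i, (∀ X ∈ 𝔨, ∀ w ∈ W, ⁅X, w⁆ ∈ W) → W = ⊥ ∨ W = C i) ∧
      iSup C = ⊤)
    -- ... and `dim_ℂ Hom_𝔨(τ, L_τ) = 1`:
    (hmult : ∃ f₀ : τ →ₗ[ℂ] L, f₀ ≠ 0 ∧
      (∀ (X : 𝔤) (hX : X ∈ 𝔨) (t : τ),
        f₀ ⟨⁅X, (t : V)⁆, hτstab X hX (t : V) t.2⟩ = ⁅X, f₀ t⁆) ∧
      ∀ f : τ →ₗ[ℂ] L,
        (∀ (X : 𝔤) (hX : X ∈ 𝔨) (t : τ),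
          f ⟨⁅X, (t : V)⁆, hτstab X hX (t : V) t.2⟩ = ⁅X, f t⁆) →
        ∃ c : ℂ, f = c • f₀)
    -- (v) for `γ ≠ 1`, no irreducible `𝔨`-submodule of `L_τ` is `𝔨`-isomorphic to an
    -- irreducible `𝔨`-submodule of the twist `(L_τ)^γ` (with action `X ∗ w = φ_γ(X)·w`):
    (hdistinct : ∀ γ : Γ, γ ≠ 1 →
      ∀ (W₁ : Submodule ℂ L) (h₁ : ∀ X ∈ 𝔨, ∀ w ∈ W₁, ⁅X, w⁆ ∈ W₁),
        W₁ ≠ ⊥ → (∀ W ≤ W₁, (∀ X ∈ 𝔨, ∀ w ∈ W, ⁅X, w⁆ ∈ W) → W = ⊥ ∨ W = W₁) →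
      ∀ (W₂ : Submodule ℂ L) (h₂ : ∀ X ∈ 𝔨, ∀ w ∈ W₂, ⁅φ γ X, w⁆ ∈ W₂),
        W₂ ≠ ⊥ → (∀ W ≤ W₂, (∀ X ∈ 𝔨, ∀ w ∈ W, ⁅φ γ X, w⁆ ∈ W) → W = ⊥ ∨ W = W₂) →
      ¬ ∃ e : W₁ ≃ₗ[ℂ] W₂, ∀ (X : 𝔤) (hX : X ∈ 𝔨) (w : W₁),
          (e ⟨⁅X, (w : L)⁆, h₁ X hX (w : L) w.2⟩ : W₂)
            = ⟨⁅φ γ X, ((e w : W₂) : L)⁆, h₂ X hX ((e w : W₂) : L) (e w).2⟩) :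
    -- conclusion: no invariant subspaces other than `0` and `V`
    ∀ W : Submodule ℂ V,
      (∀ X : 𝔤, ∀ w ∈ W, ⁅X, w⁆ ∈ W) → (∀ γ : Γ, ∀ w ∈ W, ρ γ w ∈ W) →
      W = ⊥ ∨ W = ⊤ :=
  stmt_8_general 𝔨 𝔭m hkm ρ φ hφone hφmul hφk hcomp hcompl v₀ hv₀ hgen τ hv₀τ hτstab hτmin hann L ι
    hιeq huniv hss hmult hdistinct
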